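/- arXiv:1601.00798 — 4 statements merged into one kernel-verified Lean document; each statement's English description precedes it below -/
import Mathlib

section
/- In the category of R-modules, Ext¹_R(Z_e, Z_o) and Ext¹_R(Z_o, Z_e) are both isomorphic to ℤ/2ℤ as abelian groups. -/
/-!
Over `R = ℤ[ξ]/(ξ² - 1)` the elements `ξ - 1` and `ξ + 1` are exact zero divisors: the
annihilator of each is the ideal generated by the other. Hence `⋯ → R --(ξ+1)--> R --(ξ-1)--> R`
is a periodic free resolution of `Z_e = R/(ξ - 1)`, and exchanging the two elements gives one of
`Z_o`. Since `Hom_R(R, N) = N`, `Ext¹(Z_e, N)` is the homology of `N --(ξ-1)--> N --(ξ+1)--> N`.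
On `N = Z_o` this is `ℤ --(-2)--> ℤ --0--> ℤ`, so `Ext¹(Z_e, Z_o) = ℤ/2ℤ`; symmetrically
`Ext¹(Z_o, Z_e)` is computed by `ℤ --2--> ℤ --0--> ℤ`.
-/

open Polynomial

noncomputable section

/-- The ring `R = ℤ[ξ]/(ξ²−1)`. -/
abbrev Runf : Type := ℤ[X] ⧸ Ideal.span {(X : ℤ[X]) ^ 2 - 1}

/-- The class of `ξ` in `R`. -/
def xi : Runf := Ideal.Quotient.mk _ X

/-- The ring homomorphism `eval₁ : R → ℤ` sending the class of `ξ` to `1`. -/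
def evalOne : Runf →+* ℤ :=
  Ideal.Quotient.lift _ (evalRingHom 1) (fun a ha => by
    obtain ⟨b, rfl⟩ := Ideal.mem_span_singleton.mp ha
    simp)

/-- The ring homomorphism `eval₋₁ : R → ℤ` sending the class of `ξ` to `-1`. -/
def evalNegOne : Runf →+* ℤ :=
  Ideal.Quotient.lift _ (evalRingHom (-1)) (fun a ha => by
    obtain ⟨b, rfl⟩ := Ideal.mem_span_singleton.mp ha
    simp)


/-- `Z_e`: the integers regarded as an `R`-module via `eval₁` (so `ξ` acts as `+1`). -/
def Ze : Type := ℤ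

/-- `Z_o`: the integers regarded as an `R`-module via `eval₋₁` (so `ξ` acts as `−1`). -/
def Zo : Type := ℤ

instance : AddCommGroup Ze := inferInstanceAs (AddCommGroup ℤ)
instance : AddCommGroup Zo := inferInstanceAs (AddCommGroup ℤ)

instance : Module Runf Ze := Module.compHom ℤ evalOne
instance : Module Runf Zo := Module.compHom ℤ evalNegOne
open CategoryTheory

universe u

section PeriodicResolution

variable {A : Type u} [CommRing A]

structure IsExactZeroDivisorPair (a b : A) : Prop where
  ker_mulLeft_left :
    LinearMap.ker (LinearMap.mulLeft A a) = LinearMap.range (LinearMap.mulLeft A b)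
  ker_mulLeft_right :
    LinearMap.ker (LinearMap.mulLeft A b) = LinearMap.range (LinearMap.mulLeft A a)

variable {a b : A}

lemma IsExactZeroDivisorPair.symm (h : IsExactZeroDivisorPair a b) : IsExactZeroDivisorPair b a :=
  ⟨h.ker_mulLeft_right, h.ker_mulLeft_left⟩

lemma IsExactZeroDivisorPair.mul_eq_zero (h : IsExactZeroDivisorPair a b) : a * b = 0 := by
  have hb : b ∈ LinearMap.range (LinearMap.mulLeft A b) := ⟨1, mul_one b⟩
  rwa [← h.ker_mulLeft_left] at hb

lemma smul_id_comp_smul_id_eq_zero (N : ModuleCat A) (hab : a * b = 0) :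
    (a • 𝟙 N) ≫ (b • 𝟙 N) = 0 := by
  simp [smul_smul, mul_comm b a, hab]

variable (a b) in
abbrev periodicComplex (hab : IsExactZeroDivisorPair a b) : ChainComplex (ModuleCat A) ℕ :=
  HomologicalComplex.alternatingConst (ModuleCat.of A A) (φ := b • 𝟙 _) (ψ := a • 𝟙 _)
    (smul_id_comp_smul_id_eq_zero _ hab.symm.mul_eq_zero)
    (smul_id_comp_smul_id_eq_zero _ hab.mul_eq_zero)
    (fun _ _ => ComplexShape.down_nat_odd_add)

variable {M : Type u} [AddCommGroup M] [Module A M] {p : A →ₗ[A] M}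

def periodicComplex.π (hab : IsExactZeroDivisorPair a b)
    (hp_ker : LinearMap.ker p = LinearMap.range (LinearMap.mulLeft A a)) :
    periodicComplex a b hab ⟶ (ChainComplex.single₀ _).obj (ModuleCat.of A M) :=
  ((periodicComplex a b hab).toSingle₀Equiv _).symm
    ⟨ModuleCat.ofHom p, by ext : 2; exact hp_ker.ge ⟨1, rfl⟩⟩

lemma periodicComplex.quasiIso_π (hab : IsExactZeroDivisorPair a b)
    (hp : Function.Surjective p)
    (hp_ker : LinearMap.ker p = LinearMap.range (LinearMap.mulLeft A a)) :
    QuasiIso (periodicComplex.π hab hp_ker) where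
  quasiIsoAt m := by
    induction m with
    | zero =>
      rw [ChainComplex.quasiIsoAt₀_iff, ShortComplex.quasiIso_iff_of_zeros' _ rfl rfl rfl]
      constructor
      · rw [ShortComplex.moduleCat_exact_iff_range_eq_ker]
        exact hp_ker.symm
      · rw [ModuleCat.epi_iff_surjective]
        exact hp
    | succ m _ =>
      rw [quasiIsoAt_iff_exactAt' (hL := ChainComplex.exactAt_succ_single_obj ..),
        HomologicalComplex.exactAt_iff' _ (m + 2) (m + 1) m (by simp) (by simp)]
      rcases Nat.even_or_odd (m + 1) with hm | hm
      · rw [ShortComplex.exact_iff_of_iso (HomologicalComplex.alternatingConstScIsoEven _ _ _ _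
          (by simp) (by simp) hm), ShortComplex.moduleCat_exact_iff_range_eq_ker]
        exact hab.ker_mulLeft_right.symm
      · rw [ShortComplex.exact_iff_of_iso (HomologicalComplex.alternatingConstScIsoOdd _ _ _ _
          (by simp) (by simp) hm), ShortComplex.moduleCat_exact_iff_range_eq_ker]
        exact hab.ker_mulLeft_left.symm

def periodicResolution (hab : IsExactZeroDivisorPair a b) (hp : Function.Surjective p)
    (hp_ker : LinearMap.ker p = LinearMap.range (LinearMap.mulLeft A a)) :
    ProjectiveResolution (ModuleCat.of A M) where
  complex := periodicComplex a b hab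
  projective _ := inferInstanceAs (Projective (ModuleCat.of A A))
  π := periodicComplex.π hab hp_ker
  quasiIso := periodicComplex.quasiIso_π hab hp hp_ker

def ModuleCat.homSelfIso (N : ModuleCat A) : ModuleCat.of A (ModuleCat.of A A ⟶ N) ≅ N :=
  (ModuleCat.homLinearEquiv.trans (LinearMap.ringLmapEquivSelf A A N)).toModuleIso

lemma ModuleCat.leftComp_smul_id_comp_homSelfIso_hom (N : ModuleCat A) (c : A) :
    ModuleCat.ofHom (Linear.leftComp A N (c • 𝟙 (ModuleCat.of A A))) ≫
      (ModuleCat.homSelfIso N).hom = (ModuleCat.homSelfIso N).hom ≫ (c • 𝟙 N) := by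
  ext f
  simp [ModuleCat.homSelfIso]

def periodicComplex.linearYonedaObjIso (hab : IsExactZeroDivisorPair a b) (N : ModuleCat A) :
    (periodicComplex a b hab).linearYonedaObj A N ≅
      HomologicalComplex.alternatingConst N (φ := a • 𝟙 N) (ψ := b • 𝟙 N)
        (smul_id_comp_smul_id_eq_zero _ hab.mul_eq_zero)
        (smul_id_comp_smul_id_eq_zero _ hab.symm.mul_eq_zero)
        (fun _ _ => ComplexShape.up_nat_odd_add) :=
  HomologicalComplex.Hom.isoOfComponents (fun _ => ModuleCat.homSelfIso N) <| by
    rintro i j ⟨rfl⟩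
    by_cases hi : Even i <;>
      simp only [ChainComplex.linearYonedaObj_d, HomologicalComplex.alternatingConst_d,
        ComplexShape.up_Rel, ComplexShape.down_Rel, Nat.even_add_one, hi, ↓reduceIte,
        not_true_eq_false, not_false_eq_true] <;>
      exact (ModuleCat.leftComp_smul_id_comp_homSelfIso_hom N _).symm

def extOneIsoQuotientOfSMulEqZero (hab : IsExactZeroDivisorPair a b)
    (hp : Function.Surjective p)
    (hp_ker : LinearMap.ker p = LinearMap.range (LinearMap.mulLeft A a))
    (N : ModuleCat A) (hbN : b • 𝟙 N = 0) :
    ((Ext A (ModuleCat A) 1).obj (Opposite.op (ModuleCat.of A M))).obj N ≅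
      ModuleCat.of A (N ⧸ LinearMap.range (a • 𝟙 N).hom) :=
  (periodicResolution hab hp hp_ker).isoExt 1 N ≪≫
    HomologicalComplex.homologyMapIso (periodicComplex.linearYonedaObjIso hab N) 1 ≪≫
    HomologicalComplex.alternatingConstHomologyIsoOdd N
      (smul_id_comp_smul_id_eq_zero N hab.mul_eq_zero)
      (smul_id_comp_smul_id_eq_zero N hab.symm.mul_eq_zero)
      (fun _ _ => ComplexShape.up_nat_odd_add) (by simp) (by simp) odd_one ≪≫
    ShortComplex.asIsoHomologyι _ hbN ≪≫ ShortComplex.moduleCatOpcyclesIso _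

end PeriodicResolution

def quotientRangeSMulAddEquivZMod {A : Type*} [CommRing A] {N : ModuleCat A} (e : N ≃+ ℤ)
    (c : A) (k : ℤ) (hc : ∀ x, e (c • x) = k * e x) :
    (N ⧸ LinearMap.range (c • 𝟙 N).hom) ≃+ ZMod k.natAbs :=
  (QuotientAddGroup.congr _ (AddSubgroup.zmultiples k) e (by
    ext n
    simp only [AddSubgroup.mem_map, Submodule.mem_toAddSubgroup, LinearMap.mem_range,
      ModuleCat.hom_smul, ModuleCat.hom_id, LinearMap.smul_apply, LinearMap.id_coe, id_eq,
      exists_exists_eq_and, Int.mem_zmultiples_iff]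
    constructor
    · rintro ⟨x, rfl⟩
      exact ⟨e x, hc x⟩
    · rintro ⟨m, rfl⟩
      exact ⟨e.symm m, (hc _).trans (by rw [e.apply_symm_apply])⟩)).trans
    (Int.quotientZMultiplesEquivZMod k)

lemma Ideal.Quotient.ker_mulLeft_mk_eq_range {R : Type*} [CommRing R] [IsDomain R] {f g h : R}
    (hf : f ≠ 0) (hfg : f * g = h) :
    LinearMap.ker
        (LinearMap.mulLeft (R ⧸ Ideal.span {h}) (Ideal.Quotient.mk (Ideal.span {h}) f)) =
      LinearMap.range (LinearMap.mulLeft (R ⧸ Ideal.span {h}) (Ideal.Quotient.mk _ g)) := by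
  ext x
  constructor
  · intro hx
    obtain ⟨p, rfl⟩ := Ideal.Quotient.mk_surjective x
    rw [LinearMap.mem_ker, LinearMap.mulLeft_apply, ← map_mul, Ideal.Quotient.eq_zero_iff_mem,
      Ideal.mem_span_singleton] at hx
    obtain ⟨q, hq⟩ := hx
    have hp : p = g * q := mul_left_cancel₀ hf (by rw [hq, ← hfg, mul_assoc])
    exact ⟨Ideal.Quotient.mk _ q, by rw [hp, map_mul]; rfl⟩
  · rintro ⟨y, rfl⟩
    rw [LinearMap.mem_ker, LinearMap.mulLeft_apply, LinearMap.mulLeft_apply, ← mul_assoc,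
      ← map_mul, hfg, Ideal.Quotient.mk_singleton_self, zero_mul]

lemma Polynomial.quotient_lift_eval_eq_zero_iff {R : Type*} [CommRing R] {I : Ideal R[X]} (c : R)
    (hI : ∀ p ∈ I, evalRingHom c p = 0) (x : R[X] ⧸ I) :
    Ideal.Quotient.lift I (evalRingHom c) hI x = 0 ↔
      ∃ y, Ideal.Quotient.mk I (X - C c) * y = x := by
  obtain ⟨p, rfl⟩ := Ideal.Quotient.mk_surjective x
  constructor
  · intro hp
    exact ⟨Ideal.Quotient.mk I (p /ₘ (X - C c)), by
      rw [← map_mul, mul_divByMonic_eq_iff_isRoot.2 hp]⟩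
  · rintro ⟨y, hy⟩
    rw [← hy, map_mul]
    simp

lemma evalOne_xi : evalOne xi = 1 := by simp [evalOne, xi]

lemma evalNegOne_xi : evalNegOne xi = -1 := by simp [evalNegOne, xi]

lemma isExactZeroDivisorPair_xi_sub_one_xi_add_one : IsExactZeroDivisorPair (xi - 1) (xi + 1) where
  ker_mulLeft_left := by
    simpa [xi] using Ideal.Quotient.ker_mulLeft_mk_eq_range (X_sub_C_ne_zero (1 : ℤ))
      (show (X - C 1) * (X + 1) = (X : ℤ[X]) ^ 2 - 1 by rw [C_1]; ring)
  ker_mulLeft_right := by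
    simpa [xi] using Ideal.Quotient.ker_mulLeft_mk_eq_range (X_sub_C_ne_zero (-1 : ℤ))
      (show (X - C (-1)) * (X - 1) = (X : ℤ[X]) ^ 2 - 1 by rw [C_neg, C_1]; ring)

def evalOneₗ : Runf →ₗ[Runf] Ze where
  toFun := evalOne
  map_add' := map_add evalOne
  map_smul' := map_mul evalOne

def evalNegOneₗ : Runf →ₗ[Runf] Zo where
  toFun := evalNegOne
  map_add' := map_add evalNegOne
  map_smul' := map_mul evalNegOne

lemma evalOneₗ_surjective : Function.Surjective evalOneₗ :=
  fun (n : ℤ) => ⟨n, map_intCast evalOne n⟩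

lemma evalNegOneₗ_surjective : Function.Surjective evalNegOneₗ :=
  fun (n : ℤ) => ⟨n, map_intCast evalNegOne n⟩

lemma ker_evalOneₗ :
    LinearMap.ker evalOneₗ = LinearMap.range (LinearMap.mulLeft Runf (xi - 1)) := by
  ext x
  rw [show xi - 1 = Ideal.Quotient.mk _ (X - C 1) by simp [xi]]
  show evalOne x = 0 ↔ _
  unfold evalOne
  exact Polynomial.quotient_lift_eval_eq_zero_iff _ _ x

lemma ker_evalNegOneₗ :
    LinearMap.ker evalNegOneₗ = LinearMap.range (LinearMap.mulLeft Runf (xi + 1)) := by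
  ext x
  rw [show xi + 1 = Ideal.Quotient.mk _ (X - C (-1)) by simp [xi]]
  show evalNegOne x = 0 ↔ _
  unfold evalNegOne
  exact Polynomial.quotient_lift_eval_eq_zero_iff _ _ x

/-- `Ext¹_R(Z_e, Z_o)` and `Ext¹_R(Z_o, Z_e)` are both isomorphic to `ℤ/2ℤ`
as abelian groups. -/
theorem stmt_8 :
    Nonempty
      ((((_root_.Ext Runf (ModuleCat Runf) 1).obj
          (Opposite.op (ModuleCat.of Runf Ze))).obj (ModuleCat.of Runf Zo)) ≃+ ZMod 2) ∧
    Nonempty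
      ((((_root_.Ext Runf (ModuleCat Runf) 1).obj
          (Opposite.op (ModuleCat.of Runf Zo))).obj (ModuleCat.of Runf Ze)) ≃+ ZMod 2) := by
  have hZo : (xi + 1) • 𝟙 (ModuleCat.of Runf Zo) = 0 := by
    ext (x : ℤ)
    show evalNegOne (xi + 1) * x = 0
    simp [evalNegOne_xi]
  have hZe : (xi - 1) • 𝟙 (ModuleCat.of Runf Ze) = 0 := by
    ext (x : ℤ)
    show evalOne (xi - 1) * x = 0
    simp [evalOne_xi]
  refine ⟨⟨?_⟩, ⟨?_⟩⟩
  · refine (extOneIsoQuotientOfSMulEqZero isExactZeroDivisorPair_xi_sub_one_xi_add_one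
      evalOneₗ_surjective ker_evalOneₗ _ hZo).toLinearEquiv.toAddEquiv.trans
      (quotientRangeSMulAddEquivZMod (AddEquiv.refl ℤ) (xi - 1) (-2) fun (x : ℤ) => ?_)
    show evalNegOne (xi - 1) * x = -2 * x
    simp [evalNegOne_xi]
  · refine (extOneIsoQuotientOfSMulEqZero isExactZeroDivisorPair_xi_sub_one_xi_add_one.symm
      evalNegOneₗ_surjective ker_evalNegOneₗ _ hZe).toLinearEquiv.toAddEquiv.trans
      (quotientRangeSMulAddEquivZMod (AddEquiv.refl ℤ) (xi + 1) 2 fun (x : ℤ) => ?_)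
    show evalOne (xi + 1) * x = 2 * x
    simp [evalOne_xi]

end
end

section
/- In the category of R-modules, Ext¹_R(ℤ/2ℤ, ℤ/2ℤ) is isomorphic to ℤ/2ℤ ⊕ ℤ/2ℤ as an abelian group, where ℤ/2ℤ carries its unique R-module structure. -/
open Polynomial

noncomputable section

open CategoryTheory

/-- The (unique) ring homomorphism `R → ℤ/2ℤ`. -/
def toZMod2 : Runf →+* ZMod 2 := (Int.castRingHom (ZMod 2)).comp evalOne

/-- `ℤ/2ℤ` with its (unique) `R`-module structure. -/
instance : Module Runf (ZMod 2) := Module.compHom (ZMod 2) toZMod2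

/-!
Over `R = ℤ[C₂]` the module `ℤ/2` has the periodic free resolution
`⋯ → R² --E--> R² --D--> R² --E--> R² --D--> R² --(2, ξ-1)--> R → ℤ/2 → 0` with
`D(x, y) = ((ξ-1)x, -2x + (ξ+1)y)` and `E(x, y) = ((ξ+1)x, 2x + (ξ-1)y)`. Its exactness comes down
to three facts about `R`, read off in the `ℤ`-basis `1, ξ`: `R` has no `2`-torsion, and the
annihilator of `ξ ∓ 1` is `(ξ ± 1)R`. Every matrix entry lies in the augmentation ideal
`(2, ξ - 1)`, which kills `ℤ/2`, so all differentials of `Hom_R(P, ℤ/2)` vanish and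
`Ext¹ = Hom_R(R², ℤ/2) = (ℤ/2)²`.
-/

lemma LinearMap.map_eq_fst_smul_add_snd_smul {R M : Type*} [Semiring R] [AddCommMonoid M]
    [Module R M] (φ : R × R →ₗ[R] M) (p : R × R) : φ p = p.1 • φ (1, 0) + p.2 • φ (0, 1) := by
  conv_lhs => rw [show p = p.1 • ((1 : R), (0 : R)) + p.2 • ((0 : R), (1 : R)) by ext <;> simp]
  rw [map_add, map_smul, map_smul]

namespace Runf

lemma xi_sq : xi ^ 2 = 1 := by
  rw [xi, ← map_pow, ← map_one (Ideal.Quotient.mk _), Ideal.Quotient.eq]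
  exact Ideal.subset_span rfl

@[simp] lemma evalOne_xi : evalOne xi = 1 := by simp [evalOne, xi]

@[simp] lemma evalNegOne_xi : evalNegOne xi = -1 := by simp [evalNegOne, xi]

@[simp] lemma smul_zmod2 (r : Runf) (x : ZMod 2) : r • x = toZMod2 r * x := rfl

@[simp] lemma toZMod2_xi : toZMod2 xi = 1 := by simp [toZMod2]

lemma exists_eq_intCast_add_intCast_mul_xi (r : Runf) : ∃ a b : ℤ, r = a + b * xi := by
  obtain ⟨p, rfl⟩ := Ideal.Quotient.mk_surjective r
  have hmonic : ((X : ℤ[X]) ^ 2 - 1).Monic := by monicity!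
  have hdeg : (p %ₘ (X ^ 2 - 1)).natDegree < 2 :=
    (natDegree_modByMonic_lt p hmonic fun h => by simpa using congrArg (eval 0) h).trans_eq
      (by compute_degree!)
  have hpq : Ideal.Quotient.mk _ p =
      Ideal.Quotient.mk (Ideal.span {(X : ℤ[X]) ^ 2 - 1}) (p %ₘ (X ^ 2 - 1)) := by
    rw [Ideal.Quotient.eq, Ideal.mem_span_singleton, ← eq_sub_of_add_eq' (modByMonic_add_div p _)]
    exact dvd_mul_right _ _
  refine ⟨(p %ₘ (X ^ 2 - 1)).coeff 0, (p %ₘ (X ^ 2 - 1)).coeff 1, ?_⟩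
  conv_lhs => rw [hpq, eq_X_add_C_of_natDegree_le_one (Nat.le_of_lt_succ hdeg)]
  simp [xi, add_comm]

lemma eq_zero_of_two_mul_eq_zero {r : Runf} (h : 2 * r = 0) : r = 0 := by
  obtain ⟨a, b, rfl⟩ := exists_eq_intCast_add_intCast_mul_xi r
  have h₁ := congrArg evalOne h
  have h₂ := congrArg evalNegOne h
  simp [map_ofNat] at h₁ h₂
  obtain ⟨rfl, rfl⟩ : a = 0 ∧ b = 0 := by omega
  simp

lemma exists_eq_xi_add_one_mul {r : Runf} (h : (xi - 1) * r = 0) : ∃ s, r = (xi + 1) * s := by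
  obtain ⟨a, b, rfl⟩ := exists_eq_intCast_add_intCast_mul_xi r
  have := congrArg evalNegOne h
  simp at this
  obtain rfl : a = b := by omega
  exact ⟨a, by ring⟩

lemma exists_eq_xi_sub_one_mul {r : Runf} (h : (xi + 1) * r = 0) : ∃ s, r = (xi - 1) * s := by
  obtain ⟨a, b, rfl⟩ := exists_eq_intCast_add_intCast_mul_xi r
  have := congrArg evalOne h
  simp at this
  obtain rfl : b = -a := by omega
  exact ⟨-a, by push_cast; ring⟩

lemma exists_two_mul_add_xi_sub_one_mul {r : Runf} (h : toZMod2 r = 0) :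
    ∃ s t, 2 * s + (xi - 1) * t = r := by
  obtain ⟨a, b, rfl⟩ := exists_eq_intCast_add_intCast_mul_xi r
  simp [← Int.cast_add, ZMod.intCast_zmod_eq_zero_iff_dvd] at h
  obtain ⟨k, hk⟩ := h
  obtain rfl : a = 2 * k - b := by omega
  exact ⟨k, b, by push_cast; ring⟩

end Runf

open Runf

namespace ZModTwoResolution

def d₁ : Runf × Runf →ₗ[Runf] Runf :=
  (2 : Runf) • LinearMap.fst _ _ _ + (xi - 1) • LinearMap.snd _ _ _

def dOdd : Runf × Runf →ₗ[Runf] Runf × Runf :=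
  ((xi + 1) • LinearMap.fst _ _ _).prod d₁

def dEven : Runf × Runf →ₗ[Runf] Runf × Runf :=
  ((xi - 1) • LinearMap.fst _ _ _).prod
    ((-2 : Runf) • LinearMap.fst _ _ _ + (xi + 1) • LinearMap.snd _ _ _)

@[simp] lemma d₁_apply (p : Runf × Runf) : d₁ p = 2 * p.1 + (xi - 1) * p.2 := rfl

@[simp] lemma dOdd_apply (p : Runf × Runf) : dOdd p = ((xi + 1) * p.1, d₁ p) := rfl

@[simp] lemma dEven_apply (p : Runf × Runf) :
    dEven p = ((xi - 1) * p.1, -2 * p.1 + (xi + 1) * p.2) := rfl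

lemma d₁_comp_dEven : d₁ ∘ₗ dEven = 0 :=
  LinearMap.ext fun p => by simp; linear_combination p.2 * xi_sq

lemma dEven_comp_dOdd : dEven ∘ₗ dOdd = 0 :=
  LinearMap.ext fun p => by
    simpa using ⟨by linear_combination p.1 * xi_sq, by linear_combination p.2 * xi_sq⟩

lemma dOdd_comp_dEven : dOdd ∘ₗ dEven = 0 :=
  LinearMap.ext fun p => by
    simpa using ⟨by linear_combination p.1 * xi_sq, by linear_combination p.2 * xi_sq⟩

lemma ker_d₁_le_range_dEven : LinearMap.ker d₁ ≤ LinearMap.range dEven := by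
  rintro ⟨a, b⟩ (h : 2 * a + (xi - 1) * b = 0)
  obtain ⟨k, rfl⟩ := exists_eq_xi_sub_one_mul (r := a) <| eq_zero_of_two_mul_eq_zero <| by
    linear_combination (xi + 1) * h - b * xi_sq
  obtain ⟨m, hm⟩ := exists_eq_xi_add_one_mul (r := b + 2 * k) (by linear_combination h)
  exact ⟨(k, m), Prod.ext rfl (by simp; linear_combination -hm)⟩

lemma ker_dEven_le_range_dOdd : LinearMap.ker dEven ≤ LinearMap.range dOdd := by
  rintro ⟨a, b⟩ h
  obtain ⟨h₁ : (xi - 1) * a = 0, h₂ : -2 * a + (xi + 1) * b = 0⟩ := Prod.ext_iff.mp h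
  obtain ⟨k, rfl⟩ := exists_eq_xi_add_one_mul h₁
  obtain ⟨m, hm⟩ := exists_eq_xi_sub_one_mul (r := b - 2 * k) (by linear_combination h₂)
  exact ⟨(k, m), Prod.ext rfl (by simp; linear_combination -hm)⟩

lemma ker_dOdd_le_range_dEven : LinearMap.ker dOdd ≤ LinearMap.range dEven :=
  fun _ h => ker_d₁_le_range_dEven (congrArg Prod.snd h)

def dSucc : ℕ → (Runf × Runf →ₗ[Runf] Runf × Runf)
  | 0 => dEven
  | 1 => dOdd
  | n + 2 => dSucc n

lemma dSucc_comp_dSucc_succ : ∀ n, dSucc n ∘ₗ dSucc (n + 1) = 0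
  | 0 => dEven_comp_dOdd
  | 1 => dOdd_comp_dEven
  | n + 2 => dSucc_comp_dSucc_succ n

lemma ker_dSucc_le_range_dSucc_succ :
    ∀ n, LinearMap.ker (dSucc n) ≤ LinearMap.range (dSucc (n + 1))
  | 0 => ker_dEven_le_range_dOdd
  | 1 => ker_dOdd_le_range_dEven
  | n + 2 => ker_dSucc_le_range_dSucc_succ n

def P : ℕ → ModuleCat Runf
  | 0 => .of Runf Runf
  | _ + 1 => .of Runf (Runf × Runf)

def d : ∀ n, P (n + 1) ⟶ P n
  | 0 => ModuleCat.ofHom d₁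
  | n + 1 => ModuleCat.ofHom (dSucc n)

lemma d_comp_d : ∀ n, d (n + 1) ≫ d n = 0
  | 0 => congrArg ModuleCat.ofHom d₁_comp_dEven
  | n + 1 => congrArg ModuleCat.ofHom (dSucc_comp_dSucc_succ n)

def complex : ChainComplex (ModuleCat Runf) ℕ := ChainComplex.of P d d_comp_d

instance (n : ℕ) : Projective (complex.X n) := by
  cases n <;> exact (IsProjective.iff_projective _).mp inferInstance

def π₀ : Runf →ₗ[Runf] ZMod 2 := LinearMap.toSpanSingleton Runf (ZMod 2) 1

@[simp] lemma π₀_apply (r : Runf) : π₀ r = toZMod2 r := mul_one _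

lemma toZMod2_d₁ (p : Runf × Runf) : toZMod2 (d₁ p) = 0 := by
  simp [map_ofNat, CharTwo.two_eq_zero]

lemma π₀_comp_d₁ : π₀ ∘ₗ d₁ = 0 :=
  LinearMap.ext fun p => (π₀_apply _).trans (toZMod2_d₁ p)

lemma ker_π₀_le_range_d₁ : LinearMap.ker π₀ ≤ LinearMap.range d₁ := by
  intro r (h : π₀ r = 0)
  obtain ⟨s, t, hst⟩ := exists_two_mul_add_xi_sub_one_mul (by simpa using h)
  exact ⟨(s, t), hst⟩

lemma π₀_surjective : Function.Surjective π₀ := fun y =>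
  ⟨(y.val : ℤ), by simp [toZMod2]⟩

def π : complex ⟶ (ChainComplex.single₀ (ModuleCat Runf)).obj (.of Runf (ZMod 2)) :=
  (complex.toSingle₀Equiv _).symm
    ⟨ModuleCat.ofHom π₀, congrArg ModuleCat.ofHom π₀_comp_d₁⟩

lemma complex_d (n : ℕ) : complex.d (n + 1) n = d n := ChainComplex.of_d P d n

lemma exactAt_succ (n : ℕ) : complex.ExactAt (n + 1) := by
  rw [HomologicalComplex.exactAt_iff' complex (n + 2) (n + 1) n (by simp) (by simp),
    ShortComplex.moduleCat_exact_iff_ker_sub_range]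
  change LinearMap.ker (complex.d (n + 1) n).hom ≤ LinearMap.range (complex.d (n + 2) (n + 1)).hom
  rw [complex_d, complex_d]
  cases n with
  | zero => exact ker_d₁_le_range_dEven
  | succ n => exact ker_dSucc_le_range_dSucc_succ n

lemma quasiIsoAt_π_zero : QuasiIsoAt π 0 := by
  rw [ChainComplex.quasiIsoAt₀_iff, ShortComplex.quasiIso_iff_of_zeros' _ rfl rfl rfl]
  refine ⟨?_, ?_⟩
  · rw [ShortComplex.moduleCat_exact_iff_ker_sub_range]
    exact ker_π₀_le_range_d₁
  · exact (ModuleCat.epi_iff_surjective _).mpr π₀_surjective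

def projectiveResolution : ProjectiveResolution (ModuleCat.of Runf (ZMod 2)) where
  complex := complex
  π := π
  quasiIso := ⟨fun
    | 0 => quasiIsoAt_π_zero
    | n + 1 => (quasiIsoAt_iff_exactAt' π (n + 1) (ChainComplex.exactAt_succ_single_obj _ n)).mpr
        (exactAt_succ n)⟩

lemma comp_d₁_eq_zero (φ : Runf →ₗ[Runf] ZMod 2) : φ ∘ₗ d₁ = 0 :=
  LinearMap.ext fun p => by
    rw [LinearMap.comp_apply, ← mul_one (d₁ p), ← smul_eq_mul, map_smul, smul_zmod2,
      toZMod2_d₁, zero_mul, LinearMap.zero_apply]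

lemma comp_dEven_eq_zero (φ : Runf × Runf →ₗ[Runf] ZMod 2) : φ ∘ₗ dEven = 0 :=
  LinearMap.ext fun p => by
    rw [LinearMap.comp_apply, φ.map_eq_fst_smul_add_snd_smul]
    simp [map_ofNat, one_add_one_eq_two, CharTwo.two_eq_zero]

abbrev homComplex : CochainComplex (ModuleCat Runf) ℕ :=
  complex.linearYonedaObj Runf (.of Runf (ZMod 2))

lemma homComplex_d_zero_one : homComplex.d 0 1 = 0 := by
  ext φ : 2
  change complex.d 1 0 ≫ φ = 0
  rw [complex_d]
  exact ModuleCat.hom_ext (comp_d₁_eq_zero φ.hom)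

lemma homComplex_d_one_two : homComplex.d 1 2 = 0 := by
  ext φ : 2
  change complex.d 2 1 ≫ φ = 0
  rw [complex_d]
  exact ModuleCat.hom_ext (comp_dEven_eq_zero φ.hom)

def homologyOneIso : homComplex.homology 1 ≅ homComplex.X 1 :=
  (homComplex.isoHomologyπ 0 1 (by simp) homComplex_d_zero_one).symm ≪≫
    homComplex.iCyclesIso 1 2 (by simp) homComplex_d_one_two

end ZModTwoResolution

/-- `Ext¹_R(ℤ/2ℤ, ℤ/2ℤ)` is isomorphic to `ℤ/2ℤ ⊕ ℤ/2ℤ` as an abelian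
group, where `ℤ/2ℤ` carries its unique `R`-module structure. -/
theorem stmt_10 :
    Nonempty
      ((((_root_.Ext Runf (ModuleCat Runf) 1).obj
          (Opposite.op (ModuleCat.of Runf (ZMod 2)))).obj (ModuleCat.of Runf (ZMod 2)))
        ≃+ (ZMod 2 × ZMod 2)) :=
  ⟨(ZModTwoResolution.projectiveResolution.isoExt 1 _ ≪≫
      ZModTwoResolution.homologyOneIso).toLinearEquiv.toAddEquiv.trans <|
    ModuleCat.homAddEquiv.trans <| ((LinearMap.coprodEquiv Runf).symm ≪≫ₗ
      (LinearMap.ringLmapEquivSelf Runf Runf _).prodCongr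
        (LinearMap.ringLmapEquivSelf Runf Runf _)).toAddEquiv⟩
end
end

section
/- Let 0 → B →ⁱ P →ᵖ A → 0 be a degreewise short exact sequence of cochain complexes of abelian groups, and suppose there exists a chain map r : P → B with r ∘ i = 2·id_B. Then the connecting homomorphism δ : Hⁿ(A) → Hⁿ⁺¹(B) of the associated long exact cohomology sequence satisfies 2δ = 0, i.e., every element in the image of δ is annihilated by 2. -/
open CategoryTheory

namespace HomologicalComplex

variable {C ι : Type*} [Category* C] [Abelian C] {c : ComplexShape ι}

lemma homologyMap_zsmul {K L : HomologicalComplex C c} (k : ℤ) (f : K ⟶ L) (i : ι) :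
    homologyMap (k • f) i = k • homologyMap f i :=
  (homologyFunctor C c i).map_zsmul

end HomologicalComplex

namespace CategoryTheory.ShortComplex.ShortExact

variable {C ι : Type*} [Category* C] [Abelian C] {c : ComplexShape ι}
  {S : ShortComplex (HomologicalComplex C c)}

lemma zsmul_δ_eq_zero (hS : S.ShortExact) (i j : ι) (hij : c.Rel i j) {r : S.X₂ ⟶ S.X₁}
    {k : ℤ} (hr : S.f ≫ r = k • 𝟙 S.X₁) : k • hS.δ i j hij = 0 :=
  calc k • hS.δ i j hij
      = hS.δ i j hij ≫ HomologicalComplex.homologyMap (k • 𝟙 S.X₁) j := by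
        rw [HomologicalComplex.homologyMap_zsmul, HomologicalComplex.homologyMap_id,
          Preadditive.comp_zsmul, Category.comp_id]
    _ = (hS.δ i j hij ≫ HomologicalComplex.homologyMap S.f j) ≫
          HomologicalComplex.homologyMap r j := by
        rw [← hr, HomologicalComplex.homologyMap_comp, Category.assoc]
    _ = 0 := by rw [hS.δ_comp, Limits.zero_comp]

end CategoryTheory.ShortComplex.ShortExact

/-- Let `0 → B →ⁱ P →ᵖ A → 0` be a (degreewise) short exact sequence of
cochain complexes of abelian groups, encoded as a short exact short complex `S` with
`B = S.X₁`, `P = S.X₂`, `A = S.X₃`, `i = S.f`, `p = S.g`. If there is a chain map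
`r : P → B` with `r ∘ i = 2·id_B`, then the connecting homomorphism
`δ : Hⁿ(A) → Hⁿ⁺¹(B)` of the associated long exact cohomology sequence satisfies
`2·δ = 0`, i.e. every element of the image of `δ` is annihilated by `2`. -/
theorem stmt_14 (S : ShortComplex (CochainComplex AddCommGrpCat ℤ))
    (hS : S.ShortExact) (r : S.X₂ ⟶ S.X₁)
    (hr : S.f ≫ r = (2 : ℤ) • 𝟙 S.X₁) (n : ℤ) :
    (2 : ℤ) • hS.δ n (n + 1) rfl = 0 :=
  hS.zsmul_δ_eq_zero n (n + 1) rfl hr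
end

section
/- Let (Cⁿ)ₙ be a sequence of free abelian groups equipped with two families of homomorphisms d_e, d_o : Cⁿ → Cⁿ⁺¹, each satisfying d∘d = 0, such that d_e x − d_o x ∈ 2Cⁿ⁺¹ for every x ∈ Cⁿ. Define Pⁿ := {(x,y) ∈ Cⁿ × Cⁿ : x − y ∈ 2Cⁿ} with differential (x,y) ↦ (d_e x, d_o y). Then P is a cochain complex, the maps i : y ↦ (0, 2y) and p : (x,y) ↦ x form a degreewise short exact sequence of cochain complexes 0 → (C, d_o) →ⁱ P →ᵖ (C, d_e) → 0, and the connecting homomorphism δ : Hⁿ(C, d_e) → Hⁿ⁺¹(C, d_o) sends the class of any cocycle x (i.e., d_e x = 0) to the class of the unique element z with 2z = d_o x. -/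
/-! A `d_e`-cocycle `x` lifts to the diagonal element `(x, x)` of `P`, whose differential
`(d_e x, d_o x) = (0, 2z)` is `i z`; this is the whole computation of `δ`. Exactness in the
middle holds because `(0, y) ∈ P` forces `y ∈ 2C`, and injectivity of `i` is the only place
where torsion-freeness (here coming from freeness) is needed. -/

open CategoryTheory

noncomputable section

variable (C : ℤ → Type) [∀ n, AddCommGroup (C n)]
  (dE dO : ∀ n, C n →+ C (n + 1))
  (hdE : ∀ n x, dE (n + 1) (dE n x) = 0) (hdO : ∀ n x, dO (n + 1) (dO n x) = 0)
  (hpar : ∀ n (x : C n), ∃ w, dE n x - dO n x = (2 : ℤ) • w)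

/-- The cochain complex (of abelian groups = `ℤ`-modules) with components `Cⁿ` and
differential `d`. -/
def cpxOf (d : ∀ n, C n →+ C (n + 1)) (hd : ∀ n x, d (n + 1) (d n x) = 0) :
    CochainComplex (ModuleCat ℤ) ℤ :=
  CochainComplex.of (fun n => ModuleCat.of ℤ (C n))
    (fun n => ModuleCat.ofHom (d n).toIntLinearMap)
    (fun n => by
      apply ModuleCat.hom_ext
      apply LinearMap.ext
      intro x
      simpa using hd n x)

/-- `Pⁿ = {(x,y) ∈ Cⁿ × Cⁿ : x − y ∈ 2Cⁿ}`. -/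
def pullSub (n : ℤ) : Submodule ℤ (C n × C n) where
  carrier := {p | ∃ z, p.1 - p.2 = (2 : ℤ) • z}
  zero_mem' := ⟨0, by simp⟩
  add_mem' := by
    intro a b ⟨z, hz⟩ ⟨w, hw⟩
    refine ⟨z + w, ?_⟩
    have h : (a + b).1 - (a + b).2 = (a.1 - a.2) + (b.1 - b.2) := by
      simp only [Prod.fst_add, Prod.snd_add]; abel
    rw [h, hz, hw, smul_add]
  smul_mem' := by
    intro c a ⟨z, hz⟩
    refine ⟨c • z, ?_⟩
    have h : (c • a).1 - (c • a).2 = c • (a.1 - a.2) := by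
      simp only [Prod.smul_fst, Prod.smul_snd, smul_sub]
    rw [h, hz, smul_comm]

/-- The differential `(x,y) ↦ (d_e x, d_o y)` on `P`. -/
def pullD (n : ℤ) : pullSub C n →ₗ[ℤ] pullSub C (n + 1) :=
  LinearMap.restrict
    (LinearMap.prodMap (dE n).toIntLinearMap (dO n).toIntLinearMap)
    (p := pullSub C n) (q := pullSub C (n + 1)) (fun p hp => by
      obtain ⟨z, hz⟩ := hp
      obtain ⟨w, hw⟩ := hpar n p.1
      refine ⟨w + dO n z, ?_⟩
      show dE n p.1 - dO n p.2 = _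
      have h : dE n p.1 - dO n p.2 = (dE n p.1 - dO n p.1) + (dO n p.1 - dO n p.2) := by
        abel
      rw [h, hw, ← map_sub, hz, map_zsmul, ← smul_add])

/-- The pullback complex `P` with components `Pⁿ` and differential `(x,y) ↦ (d_e x, d_o y)`. -/
def pullCpx : CochainComplex (ModuleCat ℤ) ℤ :=
  CochainComplex.of (fun n => ModuleCat.of ℤ (pullSub C n))
    (fun n => ModuleCat.ofHom (pullD C dE dO hpar n))
    (fun n => by
      apply ModuleCat.hom_ext
      apply LinearMap.ext
      intro p
      refine Subtype.ext (Prod.ext ?_ ?_)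
      · show dE (n + 1) (dE n p.1.1) = _
        simp [hdE n p.1.1]
      · show dO (n + 1) (dO n p.1.2) = _
        simp [hdO n p.1.2])

/-- The chain map `i : (C, d_o) → P`, `y ↦ (0, 2y)`. -/
def pullI : cpxOf C dO hdO ⟶ pullCpx C dE dO hdE hdO hpar :=
  CochainComplex.ofHom
    (fun n => ModuleCat.ofHom (LinearMap.codRestrict (pullSub C n)
      (LinearMap.prod 0 ((2 : ℤ) • LinearMap.id))
      (fun y => ⟨-y, by
        show (0 : C n) - (2 : ℤ) • y = (2 : ℤ) • (-y)
        rw [zero_sub, smul_neg]⟩)))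
    (fun n => by
      apply ModuleCat.hom_ext
      apply LinearMap.ext
      intro y
      simp only [cpxOf, pullCpx, CochainComplex.of_d]
      refine Subtype.ext (Prod.ext ?_ ?_)
      · show dE n 0 = (0 : C n →ₗ[ℤ] C (n + 1)) y
        simp
        rfl
      · show dO n ((2 : ℤ) • y) = (2 : ℤ) • dO n y
        exact map_zsmul (dO n) 2 y)

/-- The chain map `p : P → (C, d_e)`, `(x,y) ↦ x`. -/
def pullP : pullCpx C dE dO hdE hdO hpar ⟶ cpxOf C dE hdE :=
  CochainComplex.ofHom
    (fun n => ModuleCat.ofHom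
      ((LinearMap.fst ℤ (C n) (C n)).comp (pullSub C n).subtype))
    (fun n => by
      apply ModuleCat.hom_ext
      apply LinearMap.ext
      intro p
      simp only [cpxOf, pullCpx, CochainComplex.of_d]
      rfl)

/-- The short complex `(C, d_o) →ⁱ P →ᵖ (C, d_e)`. -/
def pullSeq : ShortComplex (CochainComplex (ModuleCat ℤ) ℤ) :=
  ShortComplex.mk (pullI C dE dO hdE hdO hpar) (pullP C dE dO hdE hdO hpar) (by
    apply HomologicalComplex.hom_ext
    intro n
    apply ModuleCat.hom_ext
    apply LinearMap.ext
    intro y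
    rfl)

theorem pullCpx_d_apply (n : ℤ) (p : pullSub C n) :
    ((pullCpx C dE dO hdE hdO hpar).d n (n + 1) p).1 = (dE n p.1.1, dO n p.1.2) := by
  simp only [pullCpx, CochainComplex.of_d]; rfl

def pullDiag (n : ℤ) (x : C n) : pullSub C n := ⟨(x, x), 0, by simp⟩

theorem pullI_f_injective (n : ℤ) [Module.IsTorsionFree ℤ (C n)] :
    Function.Injective ((pullI C dE dO hdE hdO hpar).f n) := fun _ _ hab =>
  smul_right_injective (C n) (two_ne_zero : (2 : ℤ) ≠ 0)
    (congrArg (fun q : pullSub C n => q.1.2) hab :)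

theorem pullP_f_surjective (n : ℤ) :
    Function.Surjective ((pullP C dE dO hdE hdO hpar).f n) :=
  fun x => ⟨pullDiag C n x, rfl⟩

theorem pullSeq_map_eval_exact (n : ℤ) :
    ((pullSeq C dE dO hdE hdO hpar).map
      (HomologicalComplex.eval (ModuleCat ℤ) (ComplexShape.up ℤ) n)).Exact := by
  rw [ShortComplex.moduleCat_exact_iff]
  rintro ⟨⟨x, y⟩, w, hw⟩ (rfl : x = 0)
  refine ⟨-w, Subtype.ext (Prod.ext rfl ?_)⟩
  change (2 : ℤ) • -w = y
  rw [smul_neg, ← hw, zero_sub, neg_neg]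

theorem pullSeq_map_eval_shortExact (n : ℤ) [Module.IsTorsionFree ℤ (C n)] :
    ((pullSeq C dE dO hdE hdO hpar).map
      (HomologicalComplex.eval (ModuleCat ℤ) (ComplexShape.up ℤ) n)).ShortExact :=
  .mk' (pullSeq_map_eval_exact C dE dO hdE hdO hpar n)
    ((ModuleCat.mono_iff_injective _).2 (pullI_f_injective C dE dO hdE hdO hpar n))
    ((ModuleCat.epi_iff_surjective _).2 (pullP_f_surjective C dE dO hdE hdO hpar n))

theorem pullSeq_shortExact [∀ n, Module.IsTorsionFree ℤ (C n)] :
    (pullSeq C dE dO hdE hdO hpar).ShortExact :=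
  HomologicalComplex.shortExact_of_degreewise_shortExact _
    fun n => pullSeq_map_eval_shortExact C dE dO hdE hdO hpar n

theorem pullSeq_δ_cyclesMk (hS : (pullSeq C dE dO hdE hdO hpar).ShortExact) (n : ℤ) (x : C n)
    (z : C (n + 1)) (hz : (2 : ℤ) • z = dO n x)
    (hxc : (forget₂ (ModuleCat ℤ) Ab).map
      ((pullSeq C dE dO hdE hdO hpar).X₃.d n (n + 1)) x = 0)
    (hzc : (forget₂ (ModuleCat ℤ) Ab).map
      ((pullSeq C dE dO hdE hdO hpar).X₁.d (n + 1) (n + 1 + 1)) z = 0) :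
    (forget₂ (ModuleCat ℤ) Ab).map (hS.δ n (n + 1) rfl)
        ((forget₂ (ModuleCat ℤ) Ab).map ((pullSeq C dE dO hdE hdO hpar).X₃.homologyπ n)
          ((pullSeq C dE dO hdE hdO hpar).X₃.cyclesMk x (n + 1) (by simp) hxc)) =
      (forget₂ (ModuleCat ℤ) Ab).map ((pullSeq C dE dO hdE hdO hpar).X₁.homologyπ (n + 1))
        ((pullSeq C dE dO hdE hdO hpar).X₁.cyclesMk z (n + 1 + 1) (by simp) hzc) := by
  have hx : dE n x = 0 := by
    have h := hxc
    simp only [pullSeq, cpxOf, CochainComplex.of_d] at h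
    exact h
  have hlift : (pullI C dE dO hdE hdO hpar).f (n + 1) z =
      (pullCpx C dE dO hdE hdO hpar).d n (n + 1) (pullDiag C n x) :=
    Subtype.ext ((pullCpx_d_apply C dE dO hdE hdO hpar n _).trans (Prod.ext hx hz.symm)).symm
  exact hS.δ_apply n (n + 1) rfl x hxc (pullDiag C n x) rfl z hlift (n + 1 + 1) (by simp)

/-- Let `(Cⁿ)` be a sequence of free abelian groups with two differentials
`d_e`, `d_o` (each squaring to zero) that agree modulo `2`. Let
`Pⁿ = {(x,y) : x − y ∈ 2Cⁿ}` with differential `(x,y) ↦ (d_e x, d_o y)`. Then `P` is a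
cochain complex (by construction above), the maps `i : y ↦ (0,2y)` and `p : (x,y) ↦ x`
form a degreewise short exact sequence of cochain complexes
`0 → (C,d_o) →ⁱ P →ᵖ (C,d_e) → 0`, and its connecting homomorphism
`δ : Hⁿ(C,d_e) → Hⁿ⁺¹(C,d_o)` sends the class of any cocycle `x` (`d_e x = 0`) to the
class of the (unique, by freeness) element `z` with `2z = d_o x`. -/
theorem stmt_15 [∀ n, Module.Free ℤ (C n)] :
    (∀ n : ℤ, ((pullSeq C dE dO hdE hdO hpar).map
        (HomologicalComplex.eval (ModuleCat ℤ) (ComplexShape.up ℤ) n)).ShortExact) ∧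
    (∃ hS : (pullSeq C dE dO hdE hdO hpar).ShortExact,
      ∀ (n : ℤ) (x : C n), dE n x = 0 → ∀ (z : C (n + 1)), (2 : ℤ) • z = dO n x →
        ∀ (hxc : (forget₂ (ModuleCat ℤ) Ab).map
              ((pullSeq C dE dO hdE hdO hpar).X₃.d n (n + 1)) x = 0)
          (hzc : (forget₂ (ModuleCat ℤ) Ab).map
              ((pullSeq C dE dO hdE hdO hpar).X₁.d (n + 1) (n + 1 + 1)) z = 0),
        (forget₂ (ModuleCat ℤ) Ab).map (hS.δ n (n + 1) rfl)
          ((forget₂ (ModuleCat ℤ) Ab).map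
              ((pullSeq C dE dO hdE hdO hpar).X₃.homologyπ n)
            ((pullSeq C dE dO hdE hdO hpar).X₃.cyclesMk x (n + 1) (by simp) hxc)) =
        (forget₂ (ModuleCat ℤ) Ab).map
            ((pullSeq C dE dO hdE hdO hpar).X₁.homologyπ (n + 1))
          ((pullSeq C dE dO hdE hdO hpar).X₁.cyclesMk z (n + 1 + 1) (by simp) hzc)) :=
  ⟨fun n => pullSeq_map_eval_shortExact C dE dO hdE hdO hpar n,
    pullSeq_shortExact C dE dO hdE hdO hpar,
    fun n x _ z hz hxc hzc => pullSeq_δ_cyclesMk C dE dO hdE hdO hpar _ n x z hz hxc hzc⟩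

end
end
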